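/- Let n ≥ 2 and 1 ≤ k ≤ n−1. Let κ ∈ ℝ^n have all entries positive with κ₁ ≤ κ_j for every j. Then for every index α ≠ 1: σ_{k−1}(κ|α1) ≥ ((n−k)/(n−1))·σ_{k−1}(κ|α). -/

import Mathlib

/-!
Put `S = {1, …, n} \ {α, 1}`. Deleting `κ₁` gives `σ_{k-1}(κ|α) = σ_{k-1}(S) + κ₁ σ_{k-2}(S)`, so
the claim is `(n - k) κ₁ σ_{k-2}(S) ≤ (k - 1) σ_{k-1}(S)`. Double counting writes
`(k - 1) σ_{k-1}(S)` as the sum over `(k-2)`-sets `u ⊆ S` and `a ∈ S \ u` of `κ_a ∏_u κ`; for each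
`u` there are `|S| - (k - 2) = n - k` choices of `a`, and `κ_a ≥ κ₁` by minimality of `κ₁`.
-/

open scoped Classical

noncomputable section

/-- The `j`-th elementary symmetric function of the family `κ` restricted to the
finite index set `s`; it is `1` for `j = 0`, and `0` for `j < 0` (or for `j`
larger than the cardinality of `s`). -/
def sigmaE {ι : Type*} (s : Finset ι) (j : ℤ) (κ : ι → ℝ) : ℝ :=
  if 0 ≤ j then ∑ t ∈ s.powersetCard j.toNat, ∏ i ∈ t, κ i else 0

/-- `σ_j(κ)`, the `j`-th elementary symmetric polynomial evaluated at `κ`. -/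
def sigmaV {ι : Type*} [Fintype ι] (j : ℤ) (κ : ι → ℝ) : ℝ :=
  sigmaE Finset.univ j κ

/-- `σ_j(κ|α)`: `σ_j` of `κ` with the `α`-th entry deleted. -/
def sigmaV1 {ι : Type*} [Fintype ι] [DecidableEq ι] (j : ℤ) (κ : ι → ℝ) (α : ι) : ℝ :=
  sigmaE (Finset.univ.erase α) j κ

/-- `σ_j(κ|αβ)`: `σ_j` of `κ` with the `α`-th and `β`-th entries deleted. -/
def sigmaV2 {ι : Type*} [Fintype ι] [DecidableEq ι] (j : ℤ) (κ : ι → ℝ) (α β : ι) : ℝ :=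
  sigmaE ((Finset.univ.erase α).erase β) j κ

/-- `σ_j(A)` for a real `n × n` matrix `A`: the `j`-th elementary symmetric function of
the eigenvalues of `A` when `A` is symmetric (= Hermitian over `ℝ`), junk value `0`
otherwise. -/
def sigmaMat {n : ℕ} (j : ℤ) (A : Matrix (Fin n) (Fin n) ℝ) : ℝ :=
  if h : A.IsHermitian then sigmaV j h.eigenvalues else 0

/-- The Hessian quotient operator `F(A) = σ_n(A)/σ_{n-k}(A)`. -/
def Fquot {n : ℕ} (k : ℕ) (A : Matrix (Fin n) (Fin n) ℝ) : ℝ :=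
  sigmaMat (n : ℤ) A / sigmaMat ((n : ℤ) - (k : ℤ)) A

open Finset

section ElementarySymmetric

variable {ι : Type*} (s : Finset ι) (κ : ι → ℝ)

lemma sigmaE_natCast (j : ℕ) : sigmaE s j κ = ∑ t ∈ s.powersetCard j, ∏ i ∈ t, κ i := by
  simp [sigmaE]

lemma sigmaE_of_neg {j : ℤ} (hj : j < 0) : sigmaE s j κ = 0 := by
  simp [sigmaE, hj.not_ge]

lemma sum_powersetCard_succ_insert [DecidableEq ι] {a : ι} (ha : a ∉ s) (j : ℕ) :
    ∑ t ∈ (insert a s).powersetCard (j + 1), ∏ i ∈ t, κ i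
      = ∑ t ∈ s.powersetCard (j + 1), ∏ i ∈ t, κ i
        + κ a * ∑ t ∈ s.powersetCard j, ∏ i ∈ t, κ i := by
  have hnot : ∀ t ∈ s.powersetCard j, a ∉ t := fun t ht hat =>
    ha ((mem_powersetCard.1 ht).1 hat)
  have hdisj : Disjoint (s.powersetCard (j + 1)) ((s.powersetCard j).image (insert a)) := by
    refine disjoint_right.2 fun t ht ht' => ?_
    obtain ⟨u, -, rfl⟩ := mem_image.1 ht
    exact ha ((mem_powersetCard.1 ht').1 (mem_insert_self a u))
  have hinj : Set.InjOn (insert a) (s.powersetCard j : Set (Finset ι)) := fun x hx y hy hxy => by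
    rw [← erase_insert (hnot x hx), ← erase_insert (hnot y hy), hxy]
  rw [powersetCard_succ_insert ha, sum_union hdisj, sum_image hinj, mul_sum]
  exact congrArg _ (sum_congr rfl fun t ht => prod_insert (hnot t ht))

lemma sigmaE_insert [DecidableEq ι] {a : ι} (ha : a ∉ s) (j : ℤ) :
    sigmaE (insert a s) j κ = sigmaE s j κ + κ a * sigmaE s (j - 1) κ := by
  rcases lt_trichotomy j 0 with hj | rfl | hj
  · rw [sigmaE_of_neg _ κ hj, sigmaE_of_neg _ κ hj, sigmaE_of_neg s κ (by omega), mul_zero,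
      add_zero]
  · simp [sigmaE]
  · obtain ⟨m, rfl⟩ : ∃ m : ℕ, j = m + 1 := ⟨(j - 1).toNat, by omega⟩
    rw [add_sub_cancel_right]
    exact_mod_cast sum_powersetCard_succ_insert s κ ha m

/-- Double counting: each `(j+1)`-set `t` arises as `insert a u` from exactly the `j + 1` pairs
`(t.erase a, a)`, `a ∈ t`. -/
lemma succ_mul_sum_powersetCard_succ [DecidableEq ι] (j : ℕ) :
    ((j : ℝ) + 1) * ∑ t ∈ s.powersetCard (j + 1), ∏ i ∈ t, κ i
      = ∑ u ∈ s.powersetCard j, ∑ a ∈ s \ u, κ a * ∏ i ∈ u, κ i := by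
  have hsplit : ∀ t ∈ s.powersetCard (j + 1),
      ((j : ℝ) + 1) * ∏ i ∈ t, κ i = ∑ a ∈ t, κ a * ∏ i ∈ t.erase a, κ i := by
    intro t ht
    rw [sum_congr rfl fun a ha => mul_prod_erase t κ ha, sum_const,
      (mem_powersetCard.1 ht).2, nsmul_eq_mul]
    push_cast
    ring
  rw [mul_sum, sum_congr rfl hsplit, sum_sigma', sum_sigma']
  refine sum_nbij' (fun p => ⟨p.1.erase p.2, p.2⟩) (fun p => ⟨insert p.2 p.1, p.2⟩)
    ?_ ?_ ?_ ?_ fun _ _ => rfl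
  · rintro ⟨t, a⟩ h
    simp only [mem_sigma, mem_powersetCard, mem_sdiff] at h ⊢
    obtain ⟨⟨hts, htc⟩, hat⟩ := h
    exact ⟨⟨(erase_subset a t).trans hts, by rw [card_erase_of_mem hat, htc]; rfl⟩,
      hts hat, notMem_erase a t⟩
  · rintro ⟨u, a⟩ h
    simp only [mem_sigma, mem_powersetCard, mem_sdiff] at h ⊢
    obtain ⟨⟨hus, huc⟩, has, hau⟩ := h
    exact ⟨⟨insert_subset has hus, by rw [card_insert_of_notMem hau, huc]⟩, mem_insert_self a u⟩
  · rintro ⟨t, a⟩ h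
    simp only [mem_sigma, mem_powersetCard] at h
    simp [insert_erase h.2]
  · rintro ⟨u, a⟩ h
    simp only [mem_sigma, mem_powersetCard, mem_sdiff] at h
    simp [erase_insert h.2.2]

lemma card_sub_mul_mul_sigmaE_le {c : ℝ} (hκ : ∀ i ∈ s, 0 ≤ κ i) (hc : ∀ i ∈ s, c ≤ κ i)
    (j : ℤ) : ((#s : ℝ) - j) * c * sigmaE s j κ ≤ (j + 1) * sigmaE s (j + 1) κ := by
  rcases lt_or_ge j 0 with hj | hj
  · rw [sigmaE_of_neg s κ hj, mul_zero]
    rcases (Int.add_one_le_iff.2 hj).lt_or_eq with hj' | hj'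
    · rw [sigmaE_of_neg s κ hj', mul_zero]
    · rw [show (j : ℝ) + 1 = 0 by exact_mod_cast hj', zero_mul]
  lift j to ℕ using hj
  rw [show (j : ℤ) + 1 = (j + 1 : ℕ) by push_cast; rfl, sigmaE_natCast, sigmaE_natCast,
    Int.cast_natCast, succ_mul_sum_powersetCard_succ, mul_sum]
  refine sum_le_sum fun u hu => ?_
  obtain ⟨hus, huc⟩ := mem_powersetCard.1 hu
  have hcard : ((#(s \ u) : ℕ) : ℝ) = #s - j := by
    rw [card_sdiff_of_subset hus, Nat.cast_sub (huc ▸ card_le_card hus), huc]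
  have hprod : 0 ≤ ∏ i ∈ u, κ i := prod_nonneg fun i hi => hκ i (hus hi)
  calc ((#s : ℝ) - j) * c * ∏ i ∈ u, κ i = ∑ _a ∈ s \ u, c * ∏ i ∈ u, κ i := by
        rw [sum_const, nsmul_eq_mul, hcard, mul_assoc]
    _ ≤ ∑ a ∈ s \ u, κ a * ∏ i ∈ u, κ i :=
        sum_le_sum fun a ha => mul_le_mul_of_nonneg_right (hc a (sdiff_subset ha)) hprod

end ElementarySymmetric

/-- inequality (2.27): for positive `κ ∈ ℝⁿ` with `κ₁ ≤ κ_j` for all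
`j`, and any index `α ≠ 1`: `σ_{k-1}(κ|α1) ≥ ((n-k)/(n-1)) σ_{k-1}(κ|α)`. -/
theorem stmt_10 (n k : ℕ) (hn : 2 ≤ n)
    (κ : Fin n → ℝ) (hpos : ∀ i, 0 < κ i) :
    let i0 : Fin n := ⟨0, by omega⟩
    (∀ j, κ i0 ≤ κ j) →
    ∀ α : Fin n, α ≠ i0 →
      sigmaV2 ((k : ℤ) - 1) κ α i0
        ≥ (((n : ℝ) - (k : ℝ)) / ((n : ℝ) - 1)) * sigmaV1 ((k : ℤ) - 1) κ α := by
  intro i0 hmin α hα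
  have hi0 : i0 ∈ univ.erase α := mem_erase.2 ⟨hα.symm, mem_univ _⟩
  have hcard : (#((univ.erase α).erase i0) : ℝ) = n - 2 := by
    rw [card_erase_of_mem hi0, card_erase_of_mem (mem_univ α), card_univ, Fintype.card_fin,
      Nat.sub_sub, Nat.cast_sub hn]
    norm_num
  have hsplit := sigmaE_insert ((univ.erase α).erase i0) κ (notMem_erase i0 _) ((k : ℤ) - 1)
  rw [insert_erase hi0, sub_sub, one_add_one_eq_two] at hsplit
  have key := card_sub_mul_mul_sigmaE_le ((univ.erase α).erase i0) κ (fun i _ => (hpos i).le)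
    (fun i _ => hmin i) ((k : ℤ) - 2)
  rw [show (k : ℤ) - 2 + 1 = (k : ℤ) - 1 by ring, hcard] at key
  have hn1 : (0 : ℝ) < n - 1 := by
    have : (2 : ℝ) ≤ n := by exact_mod_cast hn
    linarith
  rw [sigmaV1, sigmaV2, hsplit, ge_iff_le, div_mul_eq_mul_div, div_le_iff₀ hn1]
  push_cast at key
  linear_combination key
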